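/- Let m ≥ 2 be an integer, h > 0 a real number, and D the circle Dirac operator of size 2m. Then for every λ ∈ ℂ^m, the spectrum of da_λ = [D, a_λ] is σ(da_λ) = {(i/h)(λ_{j+1} − λ_j), −(i/h)(λ_{j+1} − λ_j) : 1 ≤ j ≤ m−1} ∪ {(i/h)(λ_m − λ_1), −(i/h)(λ_m − λ_1)}. -/

import Mathlib

open Matrix

/-- The off-diagonal block of the circle Dirac operator: the cyclic shift with
`(D⁻)_{j,j+1} = 1` for `1 ≤ j ≤ m-1` and `(D⁻)_{m,1} = 1` (one-based), all other
entries `0`. -/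
noncomputable def DminusC (m : ℕ) : Matrix (Fin m) (Fin m) ℂ :=
  fun i j => if (i : ℕ) + 1 = (j : ℕ) ∨ ((i : ℕ) = m - 1 ∧ (j : ℕ) = 0) then 1 else 0

/-- The circle Dirac operator `D = (i/h) • [[0, D⁻], [-(D⁻)ᵀ, 0]]` of size `2m`. -/
noncomputable def DiracC (m : ℕ) (h : ℝ) : Matrix (Fin m ⊕ Fin m) (Fin m ⊕ Fin m) ℂ :=
  (Complex.I / (h : ℂ)) • Matrix.fromBlocks 0 (DminusC m) (-(DminusC m)ᵀ) 0

/-- The diagonal matrix `a_λ = diag(λ₁, …, λ_m, λ₁, …, λ_m)`. -/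
noncomputable def aDiag {m : ℕ} (lam : Fin m → ℂ) :
    Matrix (Fin m ⊕ Fin m) (Fin m ⊕ Fin m) ℂ :=
  Matrix.diagonal (Sum.elim lam lam)

/-- The commutator `da_λ = [D, a_λ]` for the circle Dirac operator. -/
noncomputable def daC (m : ℕ) (h : ℝ) (lam : Fin m → ℂ) :
    Matrix (Fin m ⊕ Fin m) (Fin m ⊕ Fin m) ℂ :=
  DiracC m h * aDiag lam - aDiag lam * DiracC m h

/- ### Auxiliary lemmas -/

/-- Eigenvector criterion for spectrum membership for matrices over `ℂ`. -/
lemma mem_spec_aux {n : Type*} [Fintype n] [DecidableEq n] (A : Matrix n n ℂ) (μ : ℂ)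
    (v : n → ℂ) (hv : v ≠ 0) (hAv : A.mulVec v = μ • v) : μ ∈ spectrum ℂ A := by
  have key : Matrix.toLinAlgEquiv' A v = A.mulVec v := by
    show Matrix.toLin' A v = _
    rw [Matrix.toLin'_apply]
  rw [← AlgEquiv.spectrum_eq (Matrix.toLinAlgEquiv' : Matrix n n ℂ ≃ₐ[ℂ] _) A,
    ← Module.End.hasEigenvalue_iff_mem_spectrum]
  exact Module.End.hasEigenvalue_of_hasEigenvector
    ⟨Module.End.mem_eigenspace_iff.mpr (by rw [key, hAv]), hv⟩

lemma DminusC_eq (m : ℕ) [NeZero m] (hm : 2 ≤ m) (i j : Fin m) :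
    DminusC m i j = if j = i + 1 then 1 else 0 := by
  have hi := i.isLt
  have hj := j.isLt
  have hval : ((i + 1 : Fin m) : ℕ) = ((i : ℕ) + 1) % m := by
    rw [Fin.val_add, Fin.val_one']
    rw [Nat.mod_eq_of_lt (show 1 < m by omega)]
  unfold DminusC
  congr 1
  simp only [eq_iff_iff, Fin.ext_iff, hval]
  rcases Nat.lt_or_ge ((i : ℕ) + 1) m with h1 | h1
  · rw [Nat.mod_eq_of_lt h1]; omega
  · have : (i : ℕ) + 1 = m := by omega
    rw [this, Nat.mod_self]; omega

/-- The off-diagonal block of the commutator. -/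
noncomputable def Cmat (m : ℕ) [NeZero m] (lam : Fin m → ℂ) : Matrix (Fin m) (Fin m) ℂ :=
  Matrix.of fun i j => if j = i + 1 then lam (i + 1) - lam i else 0

lemma daC_eq (m : ℕ) [NeZero m] (hm : 2 ≤ m) (h : ℝ) (lam : Fin m → ℂ) :
    daC m h lam = (Complex.I / (h : ℂ)) •
      Matrix.fromBlocks 0 (Cmat m lam) (Cmat m lam)ᵀ 0 := by
  rw [daC, DiracC, aDiag, Matrix.smul_mul, Matrix.mul_smul, ← smul_sub]
  congr 1
  ext p q
  rcases p with i | i <;> rcases q with j | j <;>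
    simp only [Matrix.sub_apply, Matrix.mul_diagonal, Matrix.diagonal_mul,
      Matrix.fromBlocks_apply₁₁, Matrix.fromBlocks_apply₁₂, Matrix.fromBlocks_apply₂₁,
      Matrix.fromBlocks_apply₂₂, Sum.elim_inl, Sum.elim_inr, Matrix.zero_apply,
      Matrix.neg_apply, Matrix.transpose_apply, Cmat, Matrix.of_apply, DminusC_eq m hm]
  · ring
  · split_ifs with hij
    · subst hij; ring
    · ring
  · split_ifs with hij
    · subst hij; ring
    · ring
  · ring

lemma Cmat_mul_transpose (m : ℕ) [NeZero m] (lam : Fin m → ℂ) :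
    Cmat m lam * (Cmat m lam)ᵀ =
      Matrix.diagonal (fun i => (lam (i + 1) - lam i) ^ 2) := by
  ext i j
  simp only [Matrix.mul_apply, Matrix.transpose_apply, Cmat, Matrix.of_apply,
    ite_mul, zero_mul, Finset.sum_ite_eq' Finset.univ (i + 1), Finset.mem_univ, if_true]
  rcases eq_or_ne i j with rfl | hij
  · simp [Matrix.diagonal_apply_eq]; ring
  · rw [Matrix.diagonal_apply_ne _ hij, if_neg (fun hc => hij (add_right_cancel hc)), mul_zero]

lemma transpose_mul_Cmat (m : ℕ) [NeZero m] (lam : Fin m → ℂ) :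
    (Cmat m lam)ᵀ * Cmat m lam =
      Matrix.diagonal (fun i => (lam (i - 1 + 1) - lam (i - 1)) ^ 2) := by
  ext i j
  have hiff : ∀ k : Fin m, (i = k + 1) ↔ (k = i - 1) := by
    intro k; constructor
    · rintro rfl; abel
    · rintro rfl; abel
  simp only [Matrix.mul_apply, Matrix.transpose_apply, Cmat, Matrix.of_apply, hiff,
    ite_mul, zero_mul, Finset.sum_ite_eq' Finset.univ (i - 1), Finset.mem_univ, if_true]
  rcases eq_or_ne i j with rfl | hij
  · rw [Matrix.diagonal_apply_eq, if_pos]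
    · ring
    · abel
  · rw [Matrix.diagonal_apply_ne _ hij, if_neg (fun hc => hij (by rw [hc]; abel)), mul_zero]

set_option maxHeartbeats 2000000 in
/-- For the circle Dirac operator, the spectrum of `da_λ` is
`{±(i/h)(λ_{j+1} - λ_j) : 1 ≤ j ≤ m-1} ∪ {±(i/h)(λ_m - λ_1)}`. -/
theorem spectrum_daC (m : ℕ) (hm : 2 ≤ m) (h : ℝ) (hh : 0 < h) (lam : Fin m → ℂ) :
    spectrum ℂ (daC m h lam) =
      {z : ℂ | ∃ (j : ℕ) (hj : j + 1 < m),
          z = Complex.I / (h : ℂ) *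
              (lam ⟨j + 1, hj⟩ - lam ⟨j, Nat.lt_of_succ_lt hj⟩) ∨
          z = -(Complex.I / (h : ℂ) *
              (lam ⟨j + 1, hj⟩ - lam ⟨j, Nat.lt_of_succ_lt hj⟩))}
        ∪ {Complex.I / (h : ℂ) *
            (lam ⟨m - 1, by omega⟩ - lam ⟨0, by omega⟩),
           -(Complex.I / (h : ℂ) *
            (lam ⟨m - 1, by omega⟩ - lam ⟨0, by omega⟩))} := by
  haveI : NeZero m := ⟨by omega⟩
  set t : ℂ := Complex.I / (h : ℂ) with ht
  set μ : Fin m → ℂ := fun j => lam (j + 1) - lam j with hμ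
  -- Fin arithmetic facts
  have e1 : ∀ (j : ℕ) (hj : j + 1 < m),
      (⟨j, Nat.lt_of_succ_lt hj⟩ : Fin m) + 1 = ⟨j + 1, hj⟩ := by
    intro j hj
    apply Fin.ext
    rw [Fin.val_add, Fin.val_one', Nat.mod_eq_of_lt (show 1 < m by omega)]
    exact Nat.mod_eq_of_lt hj
  have e2 : (⟨m - 1, by omega⟩ : Fin m) + 1 = (⟨0, by omega⟩ : Fin m) := by
    apply Fin.ext
    rw [Fin.val_add, Fin.val_one', Nat.mod_eq_of_lt (show 1 < m by omega)]
    show (m - 1 + 1) % m = 0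
    rw [show m - 1 + 1 = m by omega, Nat.mod_self]
  -- the square of `daC` is diagonal
  have hsquare : (daC m h lam) ^ 2 =
      Matrix.diagonal (Sum.elim (fun i => (t * μ i) ^ 2) (fun i => (t * μ (i - 1)) ^ 2)) := by
    rw [pow_two, daC_eq m hm h lam, Matrix.smul_mul, Matrix.mul_smul, smul_smul,
      Matrix.fromBlocks_multiply]
    simp only [Matrix.mul_zero, Matrix.zero_mul, zero_add, add_zero]
    rw [Cmat_mul_transpose, transpose_mul_Cmat, Matrix.fromBlocks_diagonal]
    ext p q
    rcases eq_or_ne p q with rfl | hpq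
    · rw [Matrix.smul_apply, Matrix.diagonal_apply_eq, Matrix.diagonal_apply_eq]
      rcases p with i | i <;>
        simp only [Sum.elim_inl, Sum.elim_inr, smul_eq_mul, hμ] <;> ring
    · rw [Matrix.smul_apply, Matrix.diagonal_apply_ne _ hpq, Matrix.diagonal_apply_ne _ hpq,
        smul_zero]
  -- key: eigenvalues via explicit eigenvectors
  have key : ∀ (j : Fin m) (c : ℂ), c * c = 1 →
      c * (t * μ j) ∈ spectrum ℂ (daC m h lam) := by
    intro j c hc
    apply mem_spec_aux _ _
      (Sum.elim (fun k => if k = j then (1 : ℂ) else 0) (fun k => if k = j + 1 then c else 0))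
    · intro hv0
      have := congrFun hv0 (Sum.inl j)
      simp at this
    · rw [daC_eq m hm h lam, Matrix.smul_mulVec, Matrix.fromBlocks_mulVec]
      simp only [Matrix.zero_mulVec, zero_add, add_zero]
      funext p
      rcases p with i | i
      · simp only [Pi.smul_apply, Sum.elim_inl, Matrix.mulVec, dotProduct, Cmat,
          Matrix.of_apply, Function.comp_apply, Sum.elim_inr, ite_mul, zero_mul,
          Finset.sum_ite_eq' Finset.univ (i + 1), Finset.mem_univ, if_true, smul_eq_mul, hμ]
        rcases eq_or_ne i j with rfl | hij
        · rw [if_pos rfl, if_pos rfl]; ring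
        · rw [if_neg (fun hcon => hij (add_right_cancel hcon)), if_neg hij]; ring
      · simp only [Pi.smul_apply, Sum.elim_inr, Matrix.mulVec, dotProduct, Cmat,
          Matrix.of_apply, Matrix.transpose_apply, Function.comp_apply, Sum.elim_inl,
          mul_ite, mul_one, mul_zero,
          Finset.sum_ite_eq' Finset.univ j, Finset.mem_univ, if_true, smul_eq_mul, hμ]
        rcases eq_or_ne i (j + 1) with rfl | hij
        · rw [if_pos rfl, if_pos rfl]
          have hgoal : t * (lam (j + 1) - lam j) = c * (t * (lam (j + 1) - lam j)) * c := by
            linear_combination (-(t * (lam (j + 1) - lam j))) * hc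
          exact hgoal
        · rw [if_neg hij, if_neg hij]
  ext z
  simp only [Set.mem_union, Set.mem_setOf_eq, Set.mem_insert_iff, Set.mem_singleton_iff]
  constructor
  · -- forward inclusion
    intro hz
    have hsq : z ^ 2 ∈ spectrum ℂ ((daC m h lam) ^ 2) :=
      spectrum.pow_image_subset (daC m h lam) 2 ⟨z, hz, rfl⟩
    rw [hsquare, spectrum_diagonal] at hsq
    obtain ⟨p, hp⟩ := hsq
    obtain ⟨j, hw⟩ : ∃ j : Fin m, z ^ 2 = (t * μ j) ^ 2 := by
      rcases p with j | j
      · exact ⟨j, hp.symm⟩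
      · exact ⟨j - 1, hp.symm⟩
    have hz' : z = t * μ j ∨ z = -(t * μ j) := by
      have h0 : (z - t * μ j) * (z + t * μ j) = 0 := by linear_combination hw
      rcases mul_eq_zero.mp h0 with h1 | h1
      · exact Or.inl (sub_eq_zero.mp h1)
      · exact Or.inr (eq_neg_of_add_eq_zero_left h1)
    rcases Nat.lt_or_ge ((j : ℕ) + 1) m with hj1 | hj1
    · -- interior case
      left
      refine ⟨(j : ℕ), hj1, ?_⟩
      have ej : (⟨(j : ℕ), Nat.lt_of_succ_lt hj1⟩ : Fin m) = j := Fin.ext rfl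
      have ej1 : (⟨(j : ℕ) + 1, hj1⟩ : Fin m) = j + 1 := by
        rw [← e1 (j : ℕ) hj1, ej]
      rw [ej, ej1]
      simp only [hμ] at hz'
      exact hz'
    · -- wrap-around case
      right
      have hjval : (j : ℕ) = m - 1 := by have := j.isLt; omega
      have ej : (⟨m - 1, by omega⟩ : Fin m) = j := Fin.ext hjval.symm
      have ej1 : (⟨0, by omega⟩ : Fin m) = j + 1 := by rw [← e2, ej]
      have hμj : t * μ j = -(t * (lam ⟨m - 1, by omega⟩ - lam ⟨0, by omega⟩)) := by
        simp only [hμ]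
        have hl1 : lam ⟨m - 1, by omega⟩ = lam j := congrArg lam ej
        have hl2 : lam ⟨0, by omega⟩ = lam (j + 1) := congrArg lam ej1
        rw [hl1, hl2]
        ring
      rcases hz' with rfl | rfl
      · rw [hμj]
        exact Or.inr rfl
      · rw [hμj, neg_neg]
        exact Or.inl rfl
  · -- reverse inclusion
    intro hz
    rcases hz with ⟨j, hj, hz | hz⟩ | hz | hz
    · have hk := key ⟨j, Nat.lt_of_succ_lt hj⟩ 1 (by ring)
      simp only [hμ, one_mul, e1 j hj] at hk
      rw [hz]
      exact hk
    · have hk := key ⟨j, Nat.lt_of_succ_lt hj⟩ (-1) (by ring)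
      simp only [hμ, neg_one_mul, e1 j hj] at hk
      rw [hz]
      exact hk
    · have hk := key ⟨m - 1, by omega⟩ (-1) (by ring)
      simp only [hμ, e2] at hk
      have heq : t * (lam (⟨m - 1, by omega⟩ : Fin m) - lam (⟨0, by omega⟩ : Fin m)) =
          -1 * (t * (lam (⟨0, by omega⟩ : Fin m) - lam (⟨m - 1, by omega⟩ : Fin m))) := by
        ring
      rw [hz, heq]
      exact hk
    · have hk := key ⟨m - 1, by omega⟩ 1 (by ring)
      simp only [hμ, e2, one_mul] at hk
      have heq : -(t * (lam (⟨m - 1, by omega⟩ : Fin m) - lam (⟨0, by omega⟩ : Fin m))) =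
          t * (lam (⟨0, by omega⟩ : Fin m) - lam (⟨m - 1, by omega⟩ : Fin m)) := by
        ring
      rw [hz, heq]
      exact hk
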